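/- Let G be a cubic edge-reflexive graph and let X = L(G). Then for each edge e of G, the graph B(X) − φ_X(e), obtained from B(X) by deleting all color classes that contain e, is bipartite; moreover, it is connected when e is a half-edge, and it has exactly two connected components when e is a full edge. -/

import Mathlib

open SimpleGraph

/-- A `k`-coloring of a graph `X`: a partition of the vertex set into `k`
(possibly empty) independent sets, the color classes of the coloring. -/
def IsColoring {V : Type*} (k : ℕ) (X : SimpleGraph V) (c : Fin k → Set V) : Prop :=
  (∀ v : V, ∃! i : Fin k, v ∈ c i) ∧
  ∀ i : Fin k, ∀ u ∈ c i, ∀ w ∈ c i, ¬ X.Adj u w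

/-- `S` occurs as a color class in some `k`-coloring of `X`. -/
def IsColorClass {V : Type*} (k : ℕ) (X : SimpleGraph V) (S : Set V) : Prop :=
  ∃ c : Fin k → Set V, IsColoring k X c ∧ ∃ i, c i = S

/-- The `k`-coloring complex `B(X)`: vertices are the color classes of
`k`-colorings of `X`, two of them adjacent if they occur together in some
`k`-coloring of `X`. -/
def ColoringComplex {V : Type*} (k : ℕ) (X : SimpleGraph V) :
    SimpleGraph {S : Set V // IsColorClass k X S} where
  Adj C D := C ≠ D ∧ ∃ c : Fin k → Set V,
    IsColoring k X c ∧ (∃ i, c i = C.1) ∧ (∃ j, c j = D.1)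
  symm := ⟨by
    rintro C D ⟨hne, c, hc, hi, hj⟩
    exact ⟨hne.symm, c, hc, hj, hi⟩⟩
  loopless := ⟨by rintro C ⟨hne, -⟩; exact hne rfl⟩

/-- The canonical map `φ_X`, sending a vertex `v` to the set of all color
classes containing `v`. -/
def phi {V : Type*} (k : ℕ) (X : SimpleGraph V) (v : V) :
    Set {S : Set V // IsColorClass k X S} :=
  {C | v ∈ C.1}

/-- `X` is reflexive for `k`-colorings: the canonical map `φ_X` is a graph
isomorphism from `X` onto `B²(X) = B(B(X))`. -/
def IsReflexive {V : Type*} (k : ℕ) (X : SimpleGraph V) : Prop :=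
  ∃ f : X ≃g ColoringComplex k (ColoringComplex k X),
    ∀ v : V, (f v : {T // IsColorClass k (ColoringComplex k X) T}).1 = phi k X v

/-- `X` is colorful for `k`-colorings: any two distinct vertices lie in
different color classes of some `k`-coloring of `X`. -/
def Colorful {V : Type*} (k : ℕ) (X : SimpleGraph V) : Prop :=
  ∀ x y : V, x ≠ y → ∃ c : Fin k → Set V, IsColoring k X c ∧
    ∃ i j : Fin k, i ≠ j ∧ x ∈ c i ∧ y ∈ c j

/-- A cubic graph, possibly with half-edges (edges incident with a single
vertex, recorded as edges whose set of ends is a singleton), without parallel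
edges: every vertex is incident with exactly three edges. -/
structure CubicGraph (V E : Type*) [DecidableEq V] where
  ends : E → Finset V
  ends_card : ∀ e, (ends e).card = 1 ∨ (ends e).card = 2
  no_parallel : ∀ e f, (ends e).card = 2 → ends e = ends f → e = f
  cubic : ∀ v : V, ∃ a b c : E, a ≠ b ∧ a ≠ c ∧ b ≠ c ∧
    ∀ f : E, v ∈ ends f ↔ f = a ∨ f = b ∨ f = c

/-- The line graph of a cubic graph: its vertices are the edges of `G`
(including half-edges), two of them adjacent when they share an endpoint. -/
def lineGraph {V E : Type*} [DecidableEq V] (G : CubicGraph V E) : SimpleGraph E where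
  Adj e f := e ≠ f ∧ (G.ends e ∩ G.ends f).Nonempty
  symm := ⟨by rintro e f ⟨hne, hint⟩; exact ⟨hne.symm, by rwa [Finset.inter_comm]⟩⟩
  loopless := ⟨by rintro e ⟨hne, -⟩; exact hne rfl⟩

/-- A cubic graph is edge-reflexive if its line graph is reflexive for
3-colorings. -/
def EdgeReflexive {V E : Type*} [DecidableEq V] (G : CubicGraph V E) : Prop :=
  IsReflexive 3 (lineGraph G)

/-- A cubic graph is edge-colorful if its line graph is colorful for
3-colorings. -/
def EdgeColorful {V E : Type*} [DecidableEq V] (G : CubicGraph V E) : Prop :=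
  Colorful 3 (lineGraph G)

/-- The underlying simple graph of a cubic graph: two vertices are adjacent
when some (full) edge joins them. -/
def underlying {V E : Type*} [DecidableEq V] (G : CubicGraph V E) : SimpleGraph V where
  Adj u w := u ≠ w ∧ ∃ e, G.ends e = {u, w}
  symm := ⟨by rintro u w ⟨hne, e, he⟩; exact ⟨hne.symm, e, by rwa [Finset.pair_comm]⟩⟩
  loopless := ⟨by rintro u ⟨hne, -⟩; exact hne rfl⟩


/-!
Let `e, f, g` be a triangle of `X = L(G)` (the three edges at an end of `e`). Every color class
contains one of `e, f, g`, so on `B(X) − φ(e)` the predicate "contains `f`" alternates along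
edges: `B(X) − φ(e)` is bipartite. By reflexivity the neighbours of `e` in `X` correspond to the
neighbours of `φ(e)` in `B²(X)`, i.e. to the classes `D` completing `φ(e)` to a 3-coloring of
`B(X)`, i.e. to the 2-colorings of `B(X) − φ(e)`; relative to the reference 2-coloring these are
the subsets of its connected components. Hence `deg e = 2 ^ #components`, and `deg e` is `2` for
a half-edge and `4` for a full edge.
-/

/-- A 2-coloring of `H`, recorded as the predicate "has the first color". -/
def IsTwoColoring {α : Type*} (H : SimpleGraph α) (q : α → Prop) : Prop :=
  ∀ ⦃s t⦄, H.Adj s t → (q s ↔ ¬ q t)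

/-- The graph `B(X) − φ_X(v)`. -/
abbrev deletePhi {W : Type*} (k : ℕ) (X : SimpleGraph W) (v : W) :
    SimpleGraph ↥(phi k X v)ᶜ :=
  (ColoringComplex k X).induce (phi k X v)ᶜ

lemma card_eq_two_pow_of_equiv_set {α K : Type*} [Finite α] (ψ : α ≃ Set K) :
    Nat.card α = 2 ^ Nat.card K := by
  have : Finite (Set K) := .of_equiv α ψ
  have : Finite K := .of_injective _ Set.singleton_injective
  rw [Nat.card_congr ψ]
  simp [Set, Nat.card_fun]

lemma SimpleGraph.connected_of_card_connectedComponent_eq_one {α : Type*} {H : SimpleGraph α}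
    (h : Nat.card H.ConnectedComponent = 1) : H.Connected := by
  obtain ⟨_, ⟨K⟩⟩ := Nat.card_eq_one_iff_unique.1 h
  exact H.connected_iff_exists_forall_reachable.2
    ⟨K.out, fun _ => ConnectedComponent.exact (Subsingleton.elim _ _)⟩

namespace IsTwoColoring

variable {α : Type*} {H : SimpleGraph α} {p q : α → Prop}

lemma isColoring (hp : IsTwoColoring H p) : IsColoring 2 H ![{s | p s}, {s | ¬ p s}] := by
  refine ⟨fun s => ?_, fun i u hu w hw huw => ?_⟩
  · by_cases h : p s
    · exact ⟨0, h, fun j hj => by fin_cases j <;> simp_all⟩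
    · exact ⟨1, h, fun j hj => by fin_cases j <;> simp_all⟩
  · fin_cases i
    · exact (hp huw).1 hu hw
    · exact hu ((hp huw).2 hw)

lemma iff_iff_of_reachable (hp : IsTwoColoring H p) (hq : IsTwoColoring H q) {s t : α}
    (h : H.Reachable s t) : (p s ↔ q s) ↔ (p t ↔ q t) := by
  rw [reachable_iff_reflTransGen] at h
  induction h with
  | refl => rfl
  | tail _ hadj ih => rw [ih, hp hadj, hq hadj, not_iff_not]

/-- Relative to a fixed 2-coloring `p`, a 2-coloring is determined by the set of components on
which it agrees with `p`. -/
def equivSetConnectedComponent (hp : IsTwoColoring H p) :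
    {q // IsTwoColoring H q} ≃ Set H.ConnectedComponent where
  toFun q := {K | K.lift (fun s => p s ↔ q.1 s)
    fun _ _ w _ => propext (hp.iff_iff_of_reachable q.2 w.reachable)}
  invFun T := ⟨fun s => p s ↔ H.connectedComponentMk s ∈ T, fun s t h => by
    dsimp only
    rw [hp h, ConnectedComponent.connectedComponentMk_eq_of_adj h]; tauto⟩
  left_inv q := Subtype.ext <| funext fun s =>
    propext (show (p s ↔ (p s ↔ q.1 s)) ↔ q.1 s by tauto)
  right_inv T := by
    ext K
    induction K using ConnectedComponent.ind with
    | h s => show (p s ↔ (p s ↔ H.connectedComponentMk s ∈ T)) ↔ _; tauto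

end IsTwoColoring

section ColoringComplex

variable {U : Type*} {Z : SimpleGraph U}

lemma IsColorClass.not_adj {k : ℕ} {S : Set U} (hS : IsColorClass k Z S) {u w : U} (hu : u ∈ S)
    (hw : w ∈ S) : ¬ Z.Adj u w := by
  obtain ⟨c, hc, i, rfl⟩ := hS
  exact hc.2 i u hu w hw

lemma IsColorClass.mem_of_triangle {S : Set U} (hS : IsColorClass 3 Z S) {e f g : U}
    (hef : Z.Adj e f) (heg : Z.Adj e g) (hfg : Z.Adj f g) : e ∈ S ∨ f ∈ S ∨ g ∈ S := by
  obtain ⟨c, hc, i, rfl⟩ := hS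
  obtain ⟨a, ha, -⟩ := hc.1 e
  obtain ⟨b, hb, -⟩ := hc.1 f
  obtain ⟨d, hd, -⟩ := hc.1 g
  have hab : a ≠ b := by rintro rfl; exact hc.2 a e ha f hb hef
  have had : a ≠ d := by rintro rfl; exact hc.2 a e ha g hd heg
  have hbd : b ≠ d := by rintro rfl; exact hc.2 b f hb g hd hfg
  obtain rfl | rfl | rfl : i = a ∨ i = b ∨ i = d := by omega
  exacts [.inl ha, .inr (.inl hb), .inr (.inr hd)]

lemma IsColoring.mem_iff_notMem_of_adj {c : Fin 3 → Set U} (hc : IsColoring 3 Z c) {i j : Fin 3}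
    (hij : i ≠ j) {s t : U} (hst : Z.Adj s t) (hs : s ∉ c i) (ht : t ∉ c i) :
    s ∈ c j ↔ t ∉ c j := by
  refine ⟨fun hsj htj => hc.2 j s hsj t htj hst, fun htj => by_contra fun hsj => ?_⟩
  obtain ⟨l, hl, -⟩ := hc.1 s
  obtain ⟨m, hm, -⟩ := hc.1 t
  have hli : l ≠ i := by rintro rfl; exact hs hl
  have hlj : l ≠ j := by rintro rfl; exact hsj hl
  have hmi : m ≠ i := by rintro rfl; exact ht hm
  have hmj : m ≠ j := by rintro rfl; exact htj hm
  obtain rfl : l = m := by omega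
  exact hc.2 l s hl t hm hst

lemma ColoringComplex.disjoint_of_adj {k : ℕ} {C D : {S : Set U // IsColorClass k Z S}}
    (h : (ColoringComplex k Z).Adj C D) : Disjoint C.1 D.1 := by
  obtain ⟨hne, c, hc, ⟨i, hi⟩, ⟨j, hj⟩⟩ := h
  refine Set.disjoint_left.2 fun u huC huD => hne (Subtype.ext ?_)
  obtain rfl : i = j := (hc.1 u).unique (by rwa [hi]) (by rwa [hj])
  exact hi.symm.trans hj

lemma ColoringComplex.isTwoColoring_of_adj {C D : {S : Set U // IsColorClass 3 Z S}}
    (h : (ColoringComplex 3 Z).Adj C D) :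
    IsTwoColoring (Z.induce C.1ᶜ) fun s => s.1 ∈ D.1 := by
  obtain ⟨hne, c, hc, ⟨i, hi⟩, ⟨j, hj⟩⟩ := h
  have hij : i ≠ j := by rintro rfl; exact hne (Subtype.ext (hi.symm.trans hj))
  intro s t hst
  rw [← hj]
  exact hc.mem_iff_notMem_of_adj hij hst (by rw [hi]; exact s.2) (by rw [hi]; exact t.2)

lemma isColoring_of_isColorClass_of_isTwoColoring {A : Set U} (hA : IsColorClass 3 Z A)
    {q : ↥Aᶜ → Prop} (hq : IsTwoColoring (Z.induce Aᶜ) q) :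
    IsColoring 3 Z ![A, (↑) '' {s | q s}, (↑) '' {s | ¬ q s}] := by
  refine ⟨fun u => ?_, fun i => ?_⟩
  · by_cases hu : u ∈ A
    · refine ⟨0, hu, fun j hj => ?_⟩
      fin_cases j
      · rfl
      all_goals obtain ⟨s, -, rfl⟩ := hj; exact absurd hu s.2
    · by_cases hqu : q ⟨u, hu⟩
      · refine ⟨1, ⟨_, hqu, rfl⟩, fun j hj => ?_⟩
        fin_cases j
        · exact absurd hj hu
        · rfl
        · obtain ⟨s, hs, rfl⟩ := hj; exact absurd hqu hs
      · refine ⟨2, ⟨_, hqu, rfl⟩, fun j hj => ?_⟩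
        fin_cases j
        · exact absurd hj hu
        · obtain ⟨s, hs, rfl⟩ := hj; exact absurd hs hqu
        · rfl
  · fin_cases i
    · exact fun u hu w hw => hA.not_adj hu hw
    · rintro _ ⟨s, hs, rfl⟩ _ ⟨t, ht, rfl⟩ hst
      exact (hq (show (Z.induce Aᶜ).Adj s t from hst)).1 hs ht
    · rintro _ ⟨s, hs, rfl⟩ _ ⟨t, ht, rfl⟩ hst
      exact hs ((hq (show (Z.induce Aᶜ).Adj s t from hst)).2 ht)

/-- The neighbours of a nonempty class `C` in `B(Z)` are the classes completing `C` to a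
3-coloring, i.e. one side of each 2-coloring of `Z − C`. -/
def ColoringComplex.neighborSetEquiv (C : {S : Set U // IsColorClass 3 Z S})
    (hC : C.1.Nonempty) :
    (ColoringComplex 3 Z).neighborSet C ≃
      {q : ↥C.1ᶜ → Prop // IsTwoColoring (Z.induce C.1ᶜ) q} where
  toFun D := ⟨fun s => s.1 ∈ D.1.1, isTwoColoring_of_adj D.2⟩
  invFun q :=
    have hc := isColoring_of_isColorClass_of_isTwoColoring C.2 q.2
    ⟨⟨_, _, hc, 1, rfl⟩, fun hCD => by
      obtain ⟨x, hx⟩ := hC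
      obtain ⟨s, -, hs⟩ : x ∈ (↑) '' {s | q.1 s} := by rw [hCD] at hx; exact hx
      exact s.2 (hs ▸ hx), _, hc, ⟨0, rfl⟩, ⟨1, rfl⟩⟩
  left_inv D := Subtype.ext <| Subtype.ext <| Set.ext fun u =>
    ⟨by rintro ⟨s, hs, rfl⟩; exact hs,
      fun hu => ⟨⟨u, Set.disjoint_right.1 (disjoint_of_adj D.2) hu⟩, hu, rfl⟩⟩
  right_inv q := Subtype.ext <| funext fun _ => propext Subtype.val_injective.mem_set_image

end ColoringComplex

section Reflexive

variable {W : Type*} {X : SimpleGraph W} {e f g : W}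

lemma isTwoColoring_deletePhi_of_triangle (hef : X.Adj e f) (heg : X.Adj e g)
    (hfg : X.Adj f g) : IsTwoColoring (deletePhi 3 X e) fun S => f ∈ S.1.1 := by
  intro S T hST
  have hdisj := Set.disjoint_left.1 (ColoringComplex.disjoint_of_adj hST)
  refine ⟨fun hS => hdisj hS, fun hT => ?_⟩
  rcases S.1.2.mem_of_triangle hef heg hfg with he | hf | hg
  · exact absurd he S.2
  · exact hf
  · rcases T.1.2.mem_of_triangle hef heg hfg with he' | hf' | hg'
    · exact absurd he' T.2
    · exact absurd hf' hT
    · exact absurd hg' (hdisj hg)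

theorem IsReflexive.nonempty_neighborSet_equiv (hX : IsReflexive 3 X) (hef : X.Adj e f)
    (heg : X.Adj e g) (hfg : X.Adj f g) :
    Nonempty (X.neighborSet e ≃ Set (deletePhi 3 X e).ConnectedComponent) := by
  obtain ⟨φ, hφ⟩ := hX
  have hφe : (phi 3 X e).Nonempty := by
    -- `φ` separates `e` from `f`, so `B(X)` has a vertex, hence `X` has a 3-coloring
    obtain ⟨C⟩ : Nonempty {S // IsColorClass 3 X S} := by
      by_contra h
      rw [not_nonempty_iff] at h
      exact hef.ne (φ.injective (Subsingleton.elim _ _))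
    obtain ⟨c, hc, -⟩ := C.2
    obtain ⟨i, hi, -⟩ := hc.1 e
    exact ⟨⟨c i, c, hc, i, rfl⟩, hi⟩
  have hψ : ∀ D : {T // IsColorClass 3 (ColoringComplex 3 X) T}, D.1 = phi 3 X e →
      Nonempty ((ColoringComplex 3 (ColoringComplex 3 X)).neighborSet D ≃
        Set (deletePhi 3 X e).ConnectedComponent) := by
    rintro ⟨_, _⟩ rfl
    exact ⟨(ColoringComplex.neighborSetEquiv _ hφe).trans
      (isTwoColoring_deletePhi_of_triangle hef heg hfg).equivSetConnectedComponent⟩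
  obtain ⟨ψ⟩ := hψ (φ e) (hφ e)
  exact ⟨(φ.mapNeighborSet e).trans ψ⟩

end Reflexive

namespace CubicGraph

variable {V E : Type*} [DecidableEq V] (G : CubicGraph V E)

lemma ends_nonempty (e : E) : (G.ends e).Nonempty :=
  Finset.card_pos.1 (by rcases G.ends_card e with h | h <;> omega)

lemma ncard_incident (v : V) : {x | v ∈ G.ends x}.ncard = 3 := by
  obtain ⟨a, b, c, hab, hac, hbc, h⟩ := G.cubic v
  exact Set.ncard_eq_three.2 ⟨a, b, c, hab, hac, hbc, Set.ext h⟩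

lemma eq_of_mem_ends {v w : V} (hvw : v ≠ w) {x y : E} (hvx : v ∈ G.ends x)
    (hwx : w ∈ G.ends x) (hvy : v ∈ G.ends y) (hwy : w ∈ G.ends y) : x = y := by
  have hends : ∀ z, v ∈ G.ends z → w ∈ G.ends z → G.ends z = {v, w} := fun z hvz hwz =>
    (Finset.eq_of_subset_of_card_le (Finset.insert_subset hvz (by simpa using hwz))
      (by rw [Finset.card_pair hvw]; rcases G.ends_card z with h | h <;> omega)).symm
  exact G.no_parallel x y (by rw [hends x hvx hwx, Finset.card_pair hvw])
    ((hends x hvx hwx).trans (hends y hvy hwy).symm)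

lemma exists_lineGraph_triangle (e : E) :
    ∃ f g, (lineGraph G).Adj e f ∧ (lineGraph G).Adj e g ∧ (lineGraph G).Adj f g := by
  obtain ⟨v, hv⟩ := G.ends_nonempty e
  obtain ⟨a, b, c, hab, hac, hbc, h⟩ := G.cubic v
  have adj : ∀ x y, x ≠ y → v ∈ G.ends x → v ∈ G.ends y → (lineGraph G).Adj x y :=
    fun x y hxy hx hy => ⟨hxy, v, Finset.mem_inter.2 ⟨hx, hy⟩⟩
  have ha := (h a).2 (by simp)
  have hb := (h b).2 (by simp)
  have hc := (h c).2 (by simp)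
  rcases (h e).1 hv with rfl | rfl | rfl
  · exact ⟨b, c, adj _ _ hab hv hb, adj _ _ hac hv hc, adj _ _ hbc hb hc⟩
  · exact ⟨a, c, adj _ _ hab.symm hv ha, adj _ _ hbc hv hc, adj _ _ hac ha hc⟩
  · exact ⟨a, b, adj _ _ hac.symm hv ha, adj _ _ hbc.symm hv hb, adj _ _ hab ha hb⟩

lemma neighborSet_lineGraph (e : E) :
    (lineGraph G).neighborSet e = ⋃ v ∈ G.ends e, {x | v ∈ G.ends x} \ {e} := by
  ext x
  simp [_root_.lineGraph, Finset.Nonempty, ne_comm, and_comm]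

lemma ncard_neighborSet_lineGraph (e : E) :
    ((lineGraph G).neighborSet e).ncard = 2 * (G.ends e).card := by
  have hinc : ∀ v ∈ G.ends e, ({x | v ∈ G.ends x} \ {e}).ncard = 2 := fun v hv => by
    rw [Set.ncard_sdiff_singleton_of_mem (show e ∈ {x | v ∈ G.ends x} from hv), ncard_incident]
  rw [neighborSet_lineGraph]
  rcases G.ends_card e with h | h
  · obtain ⟨v, hv⟩ := Finset.card_eq_one.1 h
    rw [hv, Finset.set_biUnion_singleton, hinc v (by simp [hv]), Finset.card_singleton]
  · obtain ⟨v, w, hvw, hends⟩ := Finset.card_eq_two.1 h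
    have hdisj : Disjoint ({x | v ∈ G.ends x} \ {e}) ({x | w ∈ G.ends x} \ {e}) :=
      Set.disjoint_left.2 fun x ⟨hvx, hxe⟩ ⟨hwx, _⟩ =>
        hxe (G.eq_of_mem_ends hvw hvx hwx (by simp [hends]) (by simp [hends]))
    rw [hends, Finset.set_biUnion_insert, Finset.set_biUnion_singleton,
      Set.ncard_union_eq hdisj (Set.finite_of_ncard_pos (by rw [hinc v (by simp [hends])]; omega))
        (Set.finite_of_ncard_pos (by rw [hinc w (by simp [hends])]; omega)),
      hinc v (by simp [hends]), hinc w (by simp [hends]), Finset.card_pair hvw]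

end CubicGraph

theorem edgeReflexive_deletePhi_general {V E : Type*} [DecidableEq V]
    (G : CubicGraph V E) (href : EdgeReflexive G) (e : E) :
    (∃ c : Fin 2 → Set ↥((phi 3 (lineGraph G) e)ᶜ),
        IsColoring 2
          ((ColoringComplex 3 (lineGraph G)).induce ((phi 3 (lineGraph G) e)ᶜ)) c) ∧
    ((G.ends e).card = 1 →
      ((ColoringComplex 3 (lineGraph G)).induce ((phi 3 (lineGraph G) e)ᶜ)).Connected) ∧
    ((G.ends e).card = 2 →
      Nat.card
        ((ColoringComplex 3 (lineGraph G)).induce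
          ((phi 3 (lineGraph G) e)ᶜ)).ConnectedComponent = 2) := by
  obtain ⟨f, g, hef, heg, hfg⟩ := G.exists_lineGraph_triangle e
  obtain ⟨ψ⟩ := href.nonempty_neighborSet_equiv hef heg hfg
  have hcard : 2 ^ Nat.card (deletePhi 3 (lineGraph G) e).ConnectedComponent =
      2 * (G.ends e).card := by
    have hN := G.ncard_neighborSet_lineGraph e
    have : Finite ((lineGraph G).neighborSet e) :=
      (Set.finite_of_ncard_pos (by rw [hN]; have := (G.ends_nonempty e).card_pos; omega)).to_subtype
    rw [← hN, ← Nat.card_coe_set_eq, card_eq_two_pow_of_equiv_set ψ]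
  refine ⟨⟨_, (isTwoColoring_deletePhi_of_triangle hef heg hfg).isColoring⟩, fun h1 => ?_,
    fun h2 => Nat.pow_right_injective le_rfl (by simpa [h2] using hcard)⟩
  exact connected_of_card_connectedComponent_eq_one
    (Nat.pow_right_injective le_rfl (by simpa [h1] using hcard))

/-- If `G` is a cubic edge-reflexive graph and `X = L(G)`, then for every edge
`e` of `G` the graph `B(X) - φ_X(e)` is bipartite; moreover it is connected
when `e` is a half-edge, and it has exactly two connected components when `e`
is a full edge. -/
theorem edgeReflexive_deletePhi {V E : Type*} [DecidableEq V] [Fintype V] [Fintype E]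
    (G : CubicGraph V E) (href : EdgeReflexive G) (e : E) :
    (∃ c : Fin 2 → Set ↥((phi 3 (lineGraph G) e)ᶜ),
        IsColoring 2
          ((ColoringComplex 3 (lineGraph G)).induce ((phi 3 (lineGraph G) e)ᶜ)) c) ∧
    ((G.ends e).card = 1 →
      ((ColoringComplex 3 (lineGraph G)).induce ((phi 3 (lineGraph G) e)ᶜ)).Connected) ∧
    ((G.ends e).card = 2 →
      Nat.card
        ((ColoringComplex 3 (lineGraph G)).induce
          ((phi 3 (lineGraph G) e)ᶜ)).ConnectedComponent = 2) :=
  edgeReflexive_deletePhi_general G href e
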